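/- General composition for sequential types: if Γ ⊢ M : σ and Γ ⊢ N : τ and the type composition σ.τ is defined, then Γ ⊢ M;N : σ.τ. -/

import Mathlib

/-- Terms of the sequential λ-calculus in de Bruijn representation
(so terms are automatically identified up to α-equivalence):
nil `*`, variable prefix `x.M`, push/application `[N].M`,
and pop/abstraction `<x>.M`. -/
inductive STm : Type
  | star : STm
  | var  : Nat → STm → STm
  | push : STm → STm → STm
  | pop  : STm → STm

namespace STm

/-- Lifting of a renaming under a binder. -/
def liftF (f : Nat → Nat) : Nat → Nat
  | 0 => 0
  | n+1 => f n + 1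

/-- Renaming of de Bruijn indices. -/
def rename (f : Nat → Nat) : STm → STm
  | star => star
  | var n M => var (f n) (rename f M)
  | push N M => push (rename f N) (rename f M)
  | pop M => pop (rename (liftF f) M)

/-- Capture-avoiding composition `N ; M`. -/
def comp : STm → STm → STm
  | star, P => P
  | var n N, P => var n (comp N P)
  | push Q N, P => push Q (comp N P)
  | pop N, P => pop (comp N (rename Nat.succ P))

/-- Lifting of a substitution under a binder. -/
def liftS (σ : Nat → STm) : Nat → STm
  | 0 => var 0 star
  | n+1 => rename Nat.succ (σ n)

/-- Capture-avoiding simultaneous substitution; note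
`{N/x}(x.M) = N ; {N/x}M`. -/
def subst (σ : Nat → STm) : STm → STm
  | star => star
  | var n M => comp (σ n) (subst σ M)
  | push N M => push (subst σ N) (subst σ M)
  | pop M => pop (subst (liftS σ) M)

/-- Capture-avoiding substitution `{N/x}M` of `N` for the variable bound
immediately outside `M`. -/
def subst1 (N : STm) : STm → STm :=
  subst (fun n => match n with | 0 => N | n+1 => var n star)

end STm

/-- Machine states: a stack of terms (written bottom-first, so the top
element is the last element of the list) together with a term. -/
abbrev SState := List STm × STm

/-- The transitions of the sequential stack machine:
`(S, [N].M) → (S·N, M)` and `(S·N, <x>.M) → (S, {N/x}M)`. -/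
inductive SMStep : SState → SState → Prop
  | push (S : List STm) (N M : STm) : SMStep (S, .push N M) (S ++ [N], M)
  | pop (S : List STm) (N M : STm) : SMStep (S ++ [N], .pop M) (S, STm.subst1 N M)

/-- A run of the sequential machine: a finite sequence of transitions. -/
def SRun : SState → SState → Prop := Relation.ReflTransGen SMStep

/-- Sequential types `ρ_n…ρ_1 ⟹ τ_1…τ_m`: an implication between two
finite vectors of sequential types. The first list is the input vector
as written (i.e. `arr (rev ρ⃗) τ⃗` represents `rev(ρ⃗) ⟹ τ⃗`). -/
inductive STy : Type
  | arr : List STy → List STy → STy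

/-- Typing judgments `Γ ⊢ M : τ` of the sequential λ-calculus, with the
context `Γ` a finite map from (de Bruijn) variables to types, given as a
list. -/
inductive Typing : List STy → STm → STy → Prop
  | star (Γ : List STy) (τs : List STy) :
      Typing Γ .star (.arr τs.reverse τs)
  | var (Γ : List STy) (n : Nat) (M : STm) (ρs σs τs υs : List STy) :
      Γ[n]? = some (.arr ρs.reverse σs) →
      Typing Γ M (.arr (σs.reverse ++ τs.reverse) υs) →
      Typing Γ (.var n M) (.arr (ρs.reverse ++ τs.reverse) υs)
  | abs (Γ : List STy) (M : STm) (ρ : STy) (σs τs : List STy) :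
      Typing (ρ :: Γ) M (.arr σs.reverse τs) →
      Typing Γ (.pop M) (.arr (ρ :: σs.reverse) τs)
  | app (Γ : List STy) (N M : STm) (ρ : STy) (σs τs : List STy) :
      Typing Γ N ρ →
      Typing Γ M (.arr (ρ :: σs.reverse) τs) →
      Typing Γ (.push N M) (.arr σs.reverse τs)

/-- Type composition `σ.τ`, a partial operation given as a relation:
`TyComp σ τ ω` holds iff `σ.τ` is defined and equal to `ω`. -/
inductive TyComp : STy → STy → STy → Prop
  | left (ρs σs υs τs : List STy) :
      TyComp (.arr ρs.reverse σs) (.arr (σs.reverse ++ υs.reverse) τs)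
             (.arr (ρs.reverse ++ υs.reverse) τs)
  | right (ρs σs υs τs : List STy) :
      TyComp (.arr ρs.reverse (υs ++ σs)) (.arr σs.reverse τs)
             (.arr ρs.reverse (υs ++ τs))

/-! Running `M;N` runs `M` and then `N` on the stack `M` leaves. When `N` consumes all of
`M`'s outputs (the left case of `σ.τ`) the typing of `M;N` is built by induction on the typing
of `M`, weakening `N` under each abstraction of `M`. The right case, where `M` leaves outputs
`υ⃗` below those `N` consumes, reduces to the left one: a term passes any extra inputs through,
so `Γ ⊢ N : rev(σ⃗) ⟹ τ⃗` gives `Γ ⊢ N : rev(σ⃗) rev(υ⃗) ⟹ υ⃗ τ⃗`. -/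

theorem Typing.var' {Γ : List STy} {n : Nat} {M : STm} {a b c d : List STy}
    (hn : Γ[n]? = some (.arr a b)) (hM : Typing Γ M (.arr (b.reverse ++ c) d)) :
    Typing Γ (.var n M) (.arr (a ++ c) d) := by
  simpa using Typing.var Γ n M a.reverse b c.reverse d (by simpa using hn) (by simpa using hM)

theorem Typing.abs' {Γ : List STy} {M : STm} {ρ : STy} {a b : List STy}
    (hM : Typing (ρ :: Γ) M (.arr a b)) : Typing Γ (.pop M) (.arr (ρ :: a) b) := by
  simpa using Typing.abs Γ M ρ a.reverse b (by simpa using hM)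

theorem Typing.app' {Γ : List STy} {N M : STm} {ρ : STy} {a b : List STy}
    (hN : Typing Γ N ρ) (hM : Typing Γ M (.arr (ρ :: a) b)) :
    Typing Γ (.push N M) (.arr a b) := by
  simpa using Typing.app Γ N M ρ a.reverse b hN (by simpa using hM)

theorem Typing.rename {Γ Δ : List STy} {M : STm} {τ : STy} {f : Nat → Nat}
    (hf : ∀ n x, Γ[n]? = some x → Δ[f n]? = some x) (h : Typing Γ M τ) :
    Typing Δ (M.rename f) τ := by
  induction h generalizing Δ f with
  | star _ τs => exact Typing.star Δ τs
  | var _ n _ ρs σs τs υs hn _ ih => exact Typing.var Δ (f n) _ ρs σs τs υs (hf n _ hn) (ih hf)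
  | abs _ _ ρ σs τs _ ih =>
    refine Typing.abs Δ _ ρ σs τs (ih ?_)
    rintro (_ | n) x hx
    · simp only [List.getElem?_cons_zero, Option.some.injEq] at hx
      simp [STm.liftF, hx]
    · simpa [STm.liftF] using hf n x hx
  | app _ _ _ ρ σs τs _ _ ihN ihM => exact Typing.app Δ _ _ ρ σs τs (ihN hf) (ihM hf)

theorem Typing.weaken {Γ : List STy} {N : STm} {τ : STy} (ρ : STy) (h : Typing Γ N τ) :
    Typing (ρ :: Γ) (N.rename Nat.succ) τ :=
  h.rename fun _ _ hx => by simpa using hx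

theorem Typing.thin {Γ : List STy} {N : STm} {a b : List STy} (h : Typing Γ N (.arr a b))
    (c : List STy) : Typing Γ N (.arr (a ++ c.reverse) (c ++ b)) := by
  generalize hσ : STy.arr a b = σ at h
  induction h generalizing a b with
  | star Γ τs => cases hσ; simpa using Typing.star Γ (c ++ τs)
  | var _ _ _ _ _ _ _ hn _ ih => cases hσ; simpa using Typing.var' hn (by simpa using ih rfl)
  | abs _ _ _ _ _ _ ih => cases hσ; exact Typing.abs' (ih rfl)
  | app _ _ _ _ _ _ hN _ _ ih => cases hσ; exact Typing.app' hN (ih rfl)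

theorem Typing.comp {Γ : List STy} {M N : STm} {a b c d : List STy}
    (hM : Typing Γ M (.arr a b)) (hN : Typing Γ N (.arr (b.reverse ++ c) d)) :
    Typing Γ (M.comp N) (.arr (a ++ c) d) := by
  generalize hσ : STy.arr a b = σ at hM
  induction hM generalizing a b N with
  | star => cases hσ; simpa [STm.comp] using hN
  | var _ _ _ _ _ _ _ hn _ ih =>
    cases hσ; simpa [STm.comp] using Typing.var' hn (by simpa using ih hN rfl)
  | abs _ _ ρ _ _ _ ih => cases hσ; exact Typing.abs' (ih (hN.weaken ρ) rfl)
  | app _ _ _ _ _ _ hN' _ _ ih => cases hσ; exact Typing.app' hN' (ih hN rfl)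

/-- General composition: if `Γ ⊢ M : σ` and `Γ ⊢ N : τ` and the type
composition `σ.τ` is defined, then `Γ ⊢ M;N : σ.τ`. -/
theorem seq_composition (Γ : List STy) (M N : STm) (σ τ ω : STy)
    (hM : Typing Γ M σ) (hN : Typing Γ N τ) (hc : TyComp σ τ ω) :
    Typing Γ (M.comp N) ω := by
  cases hc with
  | left => exact hM.comp hN
  | right _ σs υs τs =>
    have hN' : Typing Γ N (.arr ((υs ++ σs).reverse ++ []) (υs ++ τs)) := by
      simpa using hN.thin υs
    simpa using hM.comp hN'
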